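/- In the Artin group A(D_4) the following equality holds: (x_1x_2x_3x_4)³ (x_1x_3x_4)⁻⁴ = x_2x_3x_2⁻¹ x_1 x_3⁻¹x_2⁻¹ x_4x_3x_2 x_1⁻¹ x_3⁻¹x_4⁻¹. -/

import Mathlib

/-!
Write `δ = x₁x₃x₄` for the Coxeter element of the parabolic `A₃`. Since `x₁` and `x₂` commute,
`x₁x₂x₃x₄ = x₂δ`, so `(x₁x₂x₃x₄)³δ⁻⁴ = x₂ · δx₂δ⁻¹ · δ²x₂δ⁻² · δ⁻¹`. Conjugation by `δ` sends
`x₁ ↦ x₃ ↦ x₄` and `x₂ ↦ β = (x₃x₂)⁻¹x₁(x₃x₂)`, hence `δβδ⁻¹ = (x₄β)⁻¹x₃(x₄β)` and the product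
collapses to `x₂(x₄⁻¹x₃x₄)βδ⁻¹`; a short chain of braid and commutation moves turns this into the
stated word.
-/

namespace ArtinTypeD

/-- `altWord a b m` is the alternating word `prod(a,b,m) = abab⋯` of length `m`. -/
def altWord {α : Type*} (a b : α) : ℕ → FreeGroup α
  | 0 => 1
  | k + 1 => FreeGroup.of a * altWord b a k

/-- The Coxeter matrix of the graph `D_l`; the `0`-based vertex `i : Fin l`
corresponds to the vertex `x_{i+1}` of `D_l`, so the edges (label `3`) are
`{x_1,x_3}`, `{x_2,x_3}` and `{x_i,x_{i+1}}` for `3 ≤ i ≤ l-1`; every other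
pair of distinct vertices has label `2`. -/
def coxD (l : ℕ) (i j : Fin l) : ℕ :=
  if i = j then 1
  else if ((i : ℕ) = 0 ∧ (j : ℕ) = 2) ∨ ((j : ℕ) = 0 ∧ (i : ℕ) = 2) ∨
      (1 ≤ (i : ℕ) ∧ (i : ℕ) + 1 = (j : ℕ)) ∨ (1 ≤ (j : ℕ) ∧ (j : ℕ) + 1 = (i : ℕ)) then 3
  else 2

/-- The Artin relators of `D_l`. -/
def relsD (l : ℕ) : Set (FreeGroup (Fin l)) :=
  {w | ∃ i j : Fin l, i ≠ j ∧ w = altWord i j (coxD l i j) * (altWord j i (coxD l i j))⁻¹}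

/-- The Artin group `A(D_l)`. -/
abbrev AD (l : ℕ) := PresentedGroup (relsD l)

/-- The generator `x_i` of `A(D_l)` (`1`-indexed, junk value `1` out of range). -/
def x (l i : ℕ) : AD l :=
  if h : 1 ≤ i ∧ i ≤ l then PresentedGroup.of (⟨i - 1, by omega⟩ : Fin l) else 1

/-- `Δ(z_1,…,z_m) = (z_1⋯z_m)(z_1⋯z_{m-1})⋯(z_1z_2)z_1`. -/
def deltaList {G : Type*} [Group G] (zs : List G) : G :=
  (((List.range zs.length).reverse).map fun k => (zs.take (k + 1)).prod).prod

/-- `Δ(x_a, x_{a+1}, …, x_b)` in `A(D_l)`. -/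
def delta (l a b : ℕ) : AD l :=
  deltaList ((List.range (b + 1 - a)).map fun k => x l (a + k))

end ArtinTypeD

section BraidRelations

variable {G : Type*} [Group G] {a b c d : G}

theorem inv_mul_mul_eq_of_braid (h : a * b * a = b * a * b) : a⁻¹ * b * a = b * a * b⁻¹ := by
  calc a⁻¹ * b * a = a⁻¹ * (b * a * b) * b⁻¹ := by group
    _ = b * a * b⁻¹ := by rw [← h]; group

theorem semiconjBy_mul_mul_left (hab : a * b * a = b * a * b) (hac : Commute a c) :
    SemiconjBy (a * b * c) a b := by
  calc a * b * c * a = a * b * (a * c) := by rw [hac.eq]; group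
    _ = b * a * b * c := by rw [← hab]; group
    _ = b * (a * b * c) := by group

theorem semiconjBy_mul_mul_middle (hbc : b * c * b = c * b * c) (hac : Commute a c) :
    SemiconjBy (a * b * c) b c := by
  calc a * b * c * b = a * (c * b * c) := by rw [← hbc]; group
    _ = c * a * b * c := by rw [← hac.eq]; group
    _ = c * (a * b * c) := by group

theorem mul_pow_three_of_semiconjBy {δ β γ : G} (hb : SemiconjBy δ b β) (hβ : SemiconjBy δ β γ) :
    (b * δ) ^ 3 = b * β * γ * δ ^ 3 := by
  calc (b * δ) ^ 3 = b * (δ * b) * (δ * b) * δ := by rw [pow_three]; group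
    _ = b * β * (δ * β) * δ * δ := by rw [hb.eq]; group
    _ = b * β * γ * δ ^ 3 := by rw [hβ.eq, pow_three]; group

structure IsArtinD4 (a b c d : G) : Prop where
  braid_ac : a * c * a = c * a * c
  braid_bc : b * c * b = c * b * c
  braid_cd : c * d * c = d * c * d
  commute_ab : Commute a b
  commute_ad : Commute a d
  commute_bd : Commute b d

namespace IsArtinD4

theorem semiconjBy_mul_mul (h : IsArtinD4 a b c d) :
    SemiconjBy (a * c * d) b ((c * b)⁻¹ * a * (c * b)) := by
  calc a * c * d * b = a * c * (b * d) := by rw [h.commute_bd.eq]; group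
    _ = b⁻¹ * (a * b) * c * b * d := by rw [h.commute_ab.eq]; group
    _ = b⁻¹ * a * (c * b * c) * d := by rw [← h.braid_bc]; group
    _ = b⁻¹ * c⁻¹ * (a * c * a) * b * c * d := by rw [h.braid_ac]; group
    _ = b⁻¹ * c⁻¹ * a * c * (b * a) * c * d := by rw [← h.commute_ab.eq]; group
    _ = (c * b)⁻¹ * a * (c * b) * (a * c * d) := by group

theorem pow_three_mul_inv_pow_four (h : IsArtinD4 a b c d) :
    (a * b * c * d) ^ 3 * ((a * c * d) ^ 4)⁻¹ =
      b * (d⁻¹ * c * d) * ((c * b)⁻¹ * a * (c * b)) * (a * c * d)⁻¹ := by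
  have ha := semiconjBy_mul_mul_left h.braid_ac h.commute_ad
  have hc := semiconjBy_mul_mul_middle h.braid_cd h.commute_ad
  have hb := h.semiconjBy_mul_mul
  have hcoxeter : a * b * c * d = b * (a * c * d) := by rw [h.commute_ab.eq]; group
  generalize a * c * d = δ at ha hb hc hcoxeter ⊢
  have hcb := hc.mul_right hb
  have hβ := (hcb.inv_right.mul_right ha).mul_right hcb
  generalize (c * b)⁻¹ * a * (c * b) = β at hb hβ ⊢
  rw [hcoxeter, mul_pow_three_of_semiconjBy hb hβ]
  group

theorem mul_conj_mul_conj_eq (h : IsArtinD4 a b c d) :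
    b * (d⁻¹ * c * d) * ((c * b)⁻¹ * a * (c * b)) * (a * c * d)⁻¹ =
      b * c * b⁻¹ * a * c⁻¹ * b⁻¹ * d * c * b * a⁻¹ * c⁻¹ * d⁻¹ := by
  have hac := inv_mul_mul_eq_of_braid h.braid_ac.symm
  have hbc := inv_mul_mul_eq_of_braid h.braid_bc
  have hcd := inv_mul_mul_eq_of_braid h.braid_cd
  have hdc := inv_mul_mul_eq_of_braid h.braid_cd.symm
  have hswap : a * (c * d * c) * a = d * c * a * c * d := by
    calc a * (c * d * c) * a = (a * d * a⁻¹) * (a * c * a) * (a⁻¹ * d * a) := by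
          rw [h.braid_cd]; group
      _ = d * c * a * c * d := by
          rw [h.commute_ad.mul_inv_cancel, h.commute_ad.inv_mul_cancel, h.braid_ac]; group
  -- In each step the cited relation rewrites the parenthesised factor back into the previous
  -- word, and `group` does the free reduction.
  calc b * (d⁻¹ * c * d) * ((c * b)⁻¹ * a * (c * b)) * (a * c * d)⁻¹
      = b * (c * d * c⁻¹) * b⁻¹ * c⁻¹ * a * c * b * d⁻¹ * c⁻¹ * a⁻¹ := by rw [← hdc]; group
    _ = b * c * d * (b * c * b)⁻¹ * a * c * b * d⁻¹ * c⁻¹ * a⁻¹ := by rw [h.braid_bc]; group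
    _ = b * c * (b⁻¹ * d) * c⁻¹ * (a * b⁻¹) * c * b * d⁻¹ * c⁻¹ * a⁻¹ := by
      rw [h.commute_bd.inv_left.eq, h.commute_ab.inv_right.eq]; group
    _ = b * c * b⁻¹ * d * c⁻¹ * a * (c * b * c⁻¹) * d⁻¹ * c⁻¹ * a⁻¹ := by rw [← hbc]; group
    _ = b * c * b⁻¹ * d * (a * c * a⁻¹) * b * c⁻¹ * d⁻¹ * c⁻¹ * a⁻¹ := by rw [← hac]; group
    _ = b * c * b⁻¹ * (a * d) * c * (b * a⁻¹) * c⁻¹ * d⁻¹ * c⁻¹ * a⁻¹ := by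
      rw [h.commute_ad.eq, ← h.commute_ab.inv_left.eq]; group
    _ = b * c * b⁻¹ * a * d * c * b * (d * c * a * c * d)⁻¹ := by rw [← hswap]; group
    _ = b * c * b⁻¹ * a * d * c * (d⁻¹ * b) * c⁻¹ * a⁻¹ * c⁻¹ * d⁻¹ := by
      rw [← h.commute_bd.inv_right.eq]; group
    _ = b * c * b⁻¹ * a * (c⁻¹ * d * c) * b * c⁻¹ * a⁻¹ * c⁻¹ * d⁻¹ := by rw [hcd]; group
    _ = b * c * b⁻¹ * a * c⁻¹ * d * (b⁻¹ * c * b) * a⁻¹ * c⁻¹ * d⁻¹ := by rw [hbc]; group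
    _ = b * c * b⁻¹ * a * c⁻¹ * (b⁻¹ * d) * c * b * a⁻¹ * c⁻¹ * d⁻¹ := by
      rw [h.commute_bd.inv_left.eq]; group
    _ = b * c * b⁻¹ * a * c⁻¹ * b⁻¹ * d * c * b * a⁻¹ * c⁻¹ * d⁻¹ := by group

end IsArtinD4

end BraidRelations

namespace ArtinTypeD

theorem mk_altWord_eq {l : ℕ} {i j : Fin l} (hij : i ≠ j) :
    PresentedGroup.mk (relsD l) (altWord i j (coxD l i j)) =
      PresentedGroup.mk (relsD l) (altWord j i (coxD l i j)) := by
  rw [← mul_inv_eq_one, ← map_inv, ← map_mul]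
  exact (QuotientGroup.eq_one_iff _).mpr (Subgroup.subset_normalClosure ⟨i, j, hij, rfl⟩)

theorem of_braid {l : ℕ} {i j : Fin l} (hij : i ≠ j) (h : coxD l i j = 3) :
    (PresentedGroup.of i : AD l) * PresentedGroup.of j * PresentedGroup.of i =
      PresentedGroup.of j * PresentedGroup.of i * PresentedGroup.of j := by
  simpa [h, altWord, mul_assoc, PresentedGroup.of] using mk_altWord_eq hij

theorem of_commute {l : ℕ} {i j : Fin l} (hij : i ≠ j) (h : coxD l i j = 2) :
    Commute (PresentedGroup.of i : AD l) (PresentedGroup.of j) := by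
  show _ * _ = _ * _
  simpa [h, altWord, PresentedGroup.of] using mk_altWord_eq hij

theorem isArtinD4_x : IsArtinD4 (x 4 1) (x 4 2) (x 4 3) (x 4 4) where
  braid_ac := of_braid (i := 0) (j := 2) (by decide) rfl
  braid_bc := of_braid (i := 1) (j := 2) (by decide) rfl
  braid_cd := of_braid (i := 2) (j := 3) (by decide) rfl
  commute_ab := of_commute (i := 0) (j := 1) (by decide) rfl
  commute_ad := of_commute (i := 0) (j := 3) (by decide) rfl
  commute_bd := of_commute (i := 1) (j := 3) (by decide) rfl

end ArtinTypeD

open ArtinTypeD in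
/-- **Lemma 3.8 (ii)** of Labruère–Paris: in `A(D_4)`,
`Δ(x_1,x_2,x_3,x_4) Δ⁻²(x_1,x_3,x_4)`, i.e. `(x_1x_2x_3x_4)³ (x_1x_3x_4)⁻⁴`,
equals `x_2x_3x_2⁻¹x_1x_3⁻¹x_2⁻¹x_4x_3x_2x_1⁻¹x_3⁻¹x_4⁻¹`. -/
theorem lemma_3_8_ii :
    (x 4 1 * x 4 2 * x 4 3 * x 4 4) ^ 3 * ((x 4 1 * x 4 3 * x 4 4) ^ 4)⁻¹ =
    x 4 2 * x 4 3 * (x 4 2)⁻¹ * x 4 1 * (x 4 3)⁻¹ * (x 4 2)⁻¹ *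
      x 4 4 * x 4 3 * x 4 2 * (x 4 1)⁻¹ * (x 4 3)⁻¹ * (x 4 4)⁻¹ :=
  isArtinD4_x.pow_three_mul_inv_pow_four.trans isArtinD4_x.mul_conj_mul_conj_eq
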